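/- arXiv:1511.03291 — 5 statements merged into one kernel-verified Lean document; each statement's English description precedes it below -/
import Mathlib

section
/- The ring homomorphism j : O_F → E⁻¹O_F exhibits E⁻¹O_F as the localization of O_F at the multiplicative submonoid generated by the elements u_n (n ≥ 1), where u_n ∈ O_F has n-th component c_n and all other components equal to 1; that is, IsLocalization holds for j with respect to this submonoid (every u_n maps to a unit, every element of E⁻¹O_F can be written as j(y)·j(s)⁻¹ with s in the submonoid, and j(y) = j(y') implies s·y = s·y' for some s in the submonoid). -/
open LaurentPolynomial

noncomputable section

/-- The ring `O_F = ∏_{n ≥ 1} ℚ[c_n]`. -/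
abbrev OF : Type := ∀ _ : ℕ+, Polynomial ℚ

/-- The product of Laurent polynomial rings `∏_{n ≥ 1} ℚ[c_n, c_n⁻¹]`. -/
abbrev LF : Type := ∀ _ : ℕ+, LaurentPolynomial ℚ

/-- The subring of `ℚ[c,c⁻¹]` of Laurent polynomials with no negative-degree terms. -/
def polyRange : Subring (LaurentPolynomial ℚ) :=
  (Polynomial.toLaurent (R := ℚ)).range

/-- `E⁻¹O_F` : sequences of Laurent polynomials which are polynomial at all but
finitely many indices. -/
def EinvOF : Subring LF where
  carrier := {f : LF | {n : ℕ+ | f n ∉ polyRange}.Finite}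
  zero_mem' := by
    refine Set.finite_empty.subset fun n hn => ?_
    simp only [Set.mem_setOf_eq, Pi.zero_apply] at hn
    exact hn (zero_mem _)
  one_mem' := by
    refine Set.finite_empty.subset fun n hn => ?_
    simp only [Set.mem_setOf_eq, Pi.one_apply] at hn
    exact hn (one_mem _)
  add_mem' := by
    intro a b ha hb
    refine (ha.union hb).subset fun n hn => ?_
    simp only [Set.mem_setOf_eq, Pi.add_apply] at hn
    by_contra h
    simp only [Set.mem_union, Set.mem_setOf_eq, not_or, not_not] at h
    exact hn (add_mem h.1 h.2)
  mul_mem' := by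
    intro a b ha hb
    refine (ha.union hb).subset fun n hn => ?_
    simp only [Set.mem_setOf_eq, Pi.mul_apply] at hn
    by_contra h
    simp only [Set.mem_union, Set.mem_setOf_eq, not_or, not_not] at h
    exact hn (mul_mem h.1 h.2)
  neg_mem' := by
    intro a ha
    refine ha.subset fun n hn => ?_
    simp only [Set.mem_setOf_eq, Pi.neg_apply] at hn
    simp only [Set.mem_setOf_eq]
    exact fun h => hn (neg_mem h)

lemma jFull_mem (f : OF) :
    (fun n => Polynomial.toLaurent (f n) : LF) ∈ EinvOF := by
  refine Set.finite_empty.subset fun n hn => ?_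
  exact hn ⟨f n, rfl⟩

/-- The evident ring homomorphism `j : O_F → E⁻¹O_F`. -/
def j : OF →+* EinvOF :=
  (Pi.ringHom fun n => (Polynomial.toLaurent (R := ℚ)).comp (Pi.evalRingHom _ n)).codRestrict
    EinvOF (fun f => jFull_mem f)

/-!
STATEMENT 1: `j : O_F → E⁻¹O_F` exhibits `E⁻¹O_F` as the localization of `O_F` at the
multiplicative submonoid generated by the elements `u_n` (`n ≥ 1`), where `u_n ∈ O_F` has
`n`-th component `c_n` and all other components equal to `1`.
-/

/-- The element `u_n ∈ O_F` whose `n`-th component is `c_n` and whose other components are `1`. -/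
def u (n : ℕ+) : OF := fun m => if m = n then Polynomial.X else 1

/-- The multiplicative submonoid of `O_F` generated by the `u_n`. -/
def Umon : Submonoid OF := Submonoid.closure (Set.range u)

instance : Algebra OF EinvOF := j.toAlgebra


/-! An element `z` of `E⁻¹O_F` has non-polynomial components only on a finite set `F` of indices,
and `z n · c_n^{k_n}` is a polynomial for `k_n` large; hence `z · ∏_{n ∈ F} u_n^{k_n}` lies in the
image of `j`. Each `j(u_n)` is a unit of `E⁻¹O_F`, its inverse differing from `1` only in the `n`-th
component, and `j` is injective. -/

open Function Set

section PiCofiniteRange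

variable {ι : Type*} (R S : ι → Type*) [∀ i, CommRing (R i)] [∀ i, CommRing (S i)]
  [∀ i, Algebra (R i) (S i)]

def piCofiniteRange : Subring (∀ i, S i) where
  carrier := {g | {i | g i ∉ (algebraMap (R i) (S i)).range}.Finite}
  zero_mem' := finite_empty.subset fun _ hi => hi (zero_mem _)
  one_mem' := finite_empty.subset fun _ hi => hi (one_mem _)
  add_mem' ha hb := (ha.union hb).subset fun _ hi => not_and_or.mp fun h => hi (add_mem h.1 h.2)
  mul_mem' ha hb := (ha.union hb).subset fun _ hi => not_and_or.mp fun h => hi (mul_mem h.1 h.2)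
  neg_mem' ha := ha.subset fun _ hi h => hi (neg_mem h)

def piCofiniteRangeMap : (∀ i, R i) →+* piCofiniteRange R S :=
  (RingHom.pi fun i => (algebraMap (R i) (S i)).comp (Pi.evalRingHom R i)).codRestrict _
    fun r => finite_empty.subset fun i hi => hi ⟨r i, rfl⟩

variable {R S}

lemma mulSingle_mem_piCofiniteRange [DecidableEq ι] (i : ι) (a : S i) :
    Pi.mulSingle i a ∈ piCofiniteRange R S :=
  (finite_singleton i).subset fun j hj => by
    by_contra hji
    exact hj (by rw [Pi.mulSingle_eq_of_ne hji]; exact one_mem _)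

lemma piCofiniteRangeMap_injective (h : ∀ i, Injective (algebraMap (R i) (S i))) :
    Injective (piCofiniteRangeMap R S) := fun _ _ hr =>
  funext fun i => h i (congr_fun (congr_arg Subtype.val hr) i)

lemma isUnit_piCofiniteRangeMap_mulSingle [DecidableEq ι] {i : ι} {a : R i}
    (ha : IsUnit (algebraMap (R i) (S i) a)) :
    IsUnit (piCofiniteRangeMap R S (Pi.mulSingle i a)) := by
  have map_mulSingle : (piCofiniteRangeMap R S (Pi.mulSingle i a) : ∀ i, S i) =
      Pi.mulSingle i (algebraMap (R i) (S i) a) :=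
    funext (Pi.apply_mulSingle (fun j => algebraMap (R j) (S j)) (fun _ => map_one _) i a)
  refine .of_mul_eq_one ⟨Pi.mulSingle i ↑ha.unit⁻¹, mulSingle_mem_piCofiniteRange i _⟩ ?_
  ext1
  rw [Subring.coe_mul, map_mulSingle, ← Pi.mulSingle_mul, IsUnit.mul_val_inv, Pi.mulSingle_one,
    Subring.coe_one]

lemma exists_mem_closure_mul_mem_range [DecidableEq ι] (x : ∀ i, R i)
    [∀ i, IsLocalization.Away (x i) (S i)] (z : piCofiniteRange R S) :
    ∃ s ∈ Submonoid.closure (range fun i => Pi.mulSingle i (x i)),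
      ∀ i, (z : ∀ i, S i) i * algebraMap (R i) (S i) (s i) ∈ (algebraMap (R i) (S i)).range := by
  have hz : {i | (z : ∀ i, S i) i ∉ (algebraMap (R i) (S i)).range}.Finite := z.2
  choose k a hka using fun i => IsLocalization.Away.surj (x i) ((z : ∀ i, S i) i)
  refine ⟨∏ i ∈ hz.toFinset, Pi.mulSingle i (x i ^ k i), prod_mem fun i _ => ?_, fun i => ?_⟩
  · rw [Pi.mulSingle_pow]
    exact pow_mem (Submonoid.subset_closure (mem_range_self i)) _
  · rw [Finset.prod_apply, Finset.prod_pi_mulSingle]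
    split_ifs with hi
    · exact ⟨a i, by rw [map_pow]; exact (hka i).symm⟩
    · rw [map_one, mul_one]
      exact not_not.mp (mt hz.mem_toFinset.mpr hi)

theorem isLocalizationMap_piCofiniteRangeMap [DecidableEq ι] (x : ∀ i, R i)
    [∀ i, IsLocalization.Away (x i) (S i)] (hinj : ∀ i, Injective (algebraMap (R i) (S i))) :
    (Submonoid.closure (range fun i => Pi.mulSingle i (x i))).IsLocalizationMap
      (piCofiniteRangeMap R S) where
  map_units s := by
    have hle : Submonoid.closure (range fun i => Pi.mulSingle i (x i)) ≤
        (IsUnit.submonoid _).comap (piCofiniteRangeMap R S).toMonoidHom :=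
      Submonoid.closure_le.mpr <| by
        rintro _ ⟨i, rfl⟩
        exact isUnit_piCofiniteRangeMap_mulSingle (IsLocalization.Away.algebraMap_isUnit (x i))
    exact hle s.2
  surj z := by
    obtain ⟨s, hs, hzs⟩ := exists_mem_closure_mul_mem_range x z
    choose y hy using hzs
    exact ⟨(y, ⟨s, hs⟩), Subtype.ext (funext fun i => (hy i).symm)⟩
  exists_of_eq h := ⟨1, by rw [piCofiniteRangeMap_injective hinj h]⟩

end PiCofiniteRange

lemma u_eq_mulSingle : u = fun n => Pi.mulSingle n (Polynomial.X : Polynomial ℚ) :=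
  funext₂ fun n m => (Pi.mulSingle_apply n _ m).symm

theorem stmt1 : algebraMap OF EinvOF = j ∧ IsLocalization Umon EinvOF := by
  refine ⟨rfl, (isLocalization_iff_isLocalizationMap _ _).mpr ?_⟩
  rw [Umon, u_eq_mulSingle]
  -- `EinvOF` and `j` are definitionally `piCofiniteRange` and `piCofiniteRangeMap` for the
  -- families `ℚ[c_n]` and `ℚ[c_n, c_n⁻¹]`.
  exact isLocalizationMap_piCofiniteRangeMap (fun _ => Polynomial.X)
    fun _ => Polynomial.toLaurent_injective

end
end

section
/- The multiplication map E⁻¹O_F ⊗_{O_F} E⁻¹O_F → E⁻¹O_F, sending a ⊗ b to a·b, is an isomorphism of O_F-modules. -/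
open LaurentPolynomial

noncomputable section

open TensorProduct

/-!
STATEMENT 5: The multiplication map `E⁻¹O_F ⊗_{O_F} E⁻¹O_F → E⁻¹O_F`, `a ⊗ b ↦ a·b`,
is an isomorphism of `O_F`-modules.
-/

set_option synthInstance.maxHeartbeats 1000000
set_option maxHeartbeats 1000000

lemma j_coe (s : OF) (n : ℕ+) : ((j s : EinvOF) : LF) n = Polynomial.toLaurent (s n) := rfl

lemma exists_data (b : EinvOF) :
    ∃ (s b' : OF) (u : EinvOF), j s * u = 1 ∧ j s * b = j b' := by
  have h : ∀ n : ℕ+, ∃ (k : ℕ) (p : Polynomial ℚ),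
      Polynomial.toLaurent p = b.val n * T (k : ℤ) ∧ (b.val n ∈ polyRange → k = 0) := by
    intro n
    by_cases hb : b.val n ∈ polyRange
    · obtain ⟨p, hp⟩ := hb
      exact ⟨0, p, by simp [hp], fun _ => rfl⟩
    · obtain ⟨k, p, hp⟩ := exists_T_pow (b.val n)
      exact ⟨k, p, hp, fun h => absurd h hb⟩
  choose K P hP hK0 using h
  refine ⟨fun n => Polynomial.X ^ K n, P,
    ⟨fun n => T (-(K n : ℤ)), ?_⟩, ?_, ?_⟩
  · refine (b.2.subset fun n hn => ?_)
    simp only [Set.mem_setOf_eq] at hn ⊢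
    intro hb
    have h0 := hK0 n hb
    rw [h0] at hn
    exact hn (by exact ⟨1, by simp⟩)
  · apply Subtype.ext
    funext n
    simp only [Subring.coe_mul, Pi.mul_apply, OneMemClass.coe_one, Pi.one_apply]
    rw [j_coe, Polynomial.toLaurent_X_pow, ← T_add]
    simp
  · apply Subtype.ext
    funext n
    simp only [Subring.coe_mul, Pi.mul_apply]
    rw [j_coe, j_coe, Polynomial.toLaurent_X_pow]
    exact (mul_comm _ _).trans (hP n).symm

lemma smul_eq_j_mul (s : OF) (x : EinvOF) : s • x = j s * x := rfl

lemma tmul_one_step (a u : EinvOF) (s : OF) (hsu : j s * u = 1) :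
    a ⊗ₜ[OF] u = (u * a) ⊗ₜ[OF] (1 : EinvOF) := by
  calc a ⊗ₜ[OF] u = (j s * u * a) ⊗ₜ[OF] u := by rw [hsu, one_mul]
    _ = (s • (u * a)) ⊗ₜ[OF] u := by rw [smul_eq_j_mul, mul_assoc]
    _ = (u * a) ⊗ₜ[OF] (s • u) := smul_tmul s _ u
    _ = (u * a) ⊗ₜ[OF] 1 := by rw [smul_eq_j_mul, hsu]

lemma tmul_eq (a b : EinvOF) :
    a ⊗ₜ[OF] b = (a * b) ⊗ₜ[OF] (1 : EinvOF) := by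
  obtain ⟨s, b', u, hsu, hsb⟩ := exists_data b
  have hb : b = b' • u := by
    rw [smul_eq_j_mul, ← hsb, mul_assoc, mul_comm (b : EinvOF) u, ← mul_assoc, hsu, one_mul]
  calc a ⊗ₜ[OF] b = a ⊗ₜ[OF] (b' • u) := by rw [← hb]
    _ = b' • (a ⊗ₜ[OF] u) := by rw [tmul_smul]
    _ = b' • ((u * a) ⊗ₜ[OF] 1) := by rw [tmul_one_step a u s hsu]
    _ = (b' • (u * a)) ⊗ₜ[OF] 1 := (smul_tmul' b' _ _).symm
    _ = (a * b) ⊗ₜ[OF] 1 := by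
        congr 1
        rw [smul_eq_j_mul, ← hsb]
        calc j s * b * (u * a) = (j s * u) * (a * b) := by ring
          _ = a * b := by rw [hsu, one_mul]

theorem stmt5 : Function.Bijective (LinearMap.mul' OF EinvOF) := by
  constructor
  · set g : EinvOF →ₗ[OF] EinvOF ⊗[OF] EinvOF := (TensorProduct.mk OF EinvOF EinvOF).flip 1
    have h : g.comp (LinearMap.mul' OF EinvOF) = LinearMap.id := by
      apply TensorProduct.ext'
      intro a b
      simp only [LinearMap.comp_apply, LinearMap.mul'_apply, LinearMap.id_apply]
      show (a * b) ⊗ₜ[OF] 1 = a ⊗ₜ[OF] b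
      exact (tmul_eq a b).symm
    intro x y hxy
    have := congrArg g hxy
    calc x = g.comp (LinearMap.mul' OF EinvOF) x := by rw [h]; rfl
      _ = g.comp (LinearMap.mul' OF EinvOF) y := by
          simpa [LinearMap.comp_apply] using this
      _ = y := by rw [h]; rfl
  · intro a
    exact ⟨a ⊗ₜ[OF] 1, by simp [LinearMap.mul'_apply]⟩

end
end

section
/- E⁻¹O_F is flat as an O_F-module; equivalently, the functor sending an O_F-module M to E⁻¹M := E⁻¹O_F ⊗_{O_F} M is exact. -/
open LaurentPolynomial

noncomputable section

/-! Inverting the monomial sequences `(c_n ^ k_n)_n` with `k` finitely supported turns `O_F` into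
`E⁻¹O_F`: every element of `E⁻¹O_F` becomes polynomial after multiplying the finitely many
non-polynomial coordinates by a power of `c_n`. Localizations are flat. -/

open Polynomial in
def finsuppMonomials : Submonoid OF where
  carrier := Set.range fun (k : ℕ+ →₀ ℕ) n => X ^ k n
  one_mem' := ⟨0, funext fun n => by simp⟩
  mul_mem' := by
    rintro _ _ ⟨k, rfl⟩ ⟨l, rfl⟩
    exact ⟨k + l, funext fun n => by simp [pow_add]⟩

lemma coe_j_apply (f : OF) (n : ℕ+) : (j f : LF) n = Polynomial.toLaurent (f n) := rfl

lemma j_injective : Function.Injective j := fun _ _ h =>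
  funext fun n => Polynomial.toLaurent_injective (congrFun (congrArg Subtype.val h) n)

lemma isUnit_j_finsuppMonomial (k : ℕ+ →₀ ℕ) :
    IsUnit (j fun n => Polynomial.X ^ k n) := by
  have hinv : (fun n => T (-(k n : ℤ)) : LF) ∈ EinvOF := by
    refine k.support.finite_toSet.subset fun n hn => ?_
    by_contra hk
    exact hn ⟨1, by simp [Finsupp.notMem_support_iff.mp hk]⟩
  refine IsUnit.of_mul_eq_one ⟨_, hinv⟩ (Subtype.ext <| funext fun n => ?_)
  simp only [Subring.coe_mul, Pi.mul_apply, coe_j_apply, Polynomial.toLaurent_X_pow, ← T_add]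
  simp

lemma exists_mul_T_eq_toLaurent (p : ℚ[T;T⁻¹]) :
    ∃ k : ℕ, (p ∈ polyRange → k = 0) ∧ ∃ a : Polynomial ℚ, Polynomial.toLaurent a = p * T k := by
  by_cases hp : p ∈ polyRange
  · obtain ⟨a, rfl⟩ := hp
    exact ⟨0, fun _ => rfl, a, by simp⟩
  · obtain ⟨k, a, ha⟩ := p.exists_T_pow
    exact ⟨k, fun h => absurd h hp, a, ha⟩

lemma exists_mul_j_finsuppMonomial_eq (z : EinvOF) :
    ∃ (k : ℕ+ →₀ ℕ) (a : OF), z * j (fun n => Polynomial.X ^ k n) = j a := by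
  choose K hK A hA using fun n => exists_mul_T_eq_toLaurent ((z : LF) n)
  have hfin : (Function.support K).Finite :=
    z.2.subset fun n hn hpoly => hn (hK n hpoly)
  refine ⟨Finsupp.ofSupportFinite K hfin, A, Subtype.ext <| funext fun n => ?_⟩
  simp [coe_j_apply, hA, Finsupp.ofSupportFinite_coe]

instance : IsLocalization finsuppMonomials EinvOF where
  map_units := by
    rintro ⟨_, k, rfl⟩
    exact isUnit_j_finsuppMonomial k
  surj z := by
    obtain ⟨k, a, h⟩ := exists_mul_j_finsuppMonomial_eq z
    exact ⟨(a, ⟨_, k, rfl⟩), h⟩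
  exists_of_eq h := ⟨1, by rw [j_injective h]⟩

theorem stmt6 : Module.Flat OF EinvOF :=
  IsLocalization.flat EinvOF finsuppMonomials

end
end

section
/- For ℚ-vector spaces U and U', the map induced by multiplication in E⁻¹O_F gives an isomorphism of O_F-modules (E⁻¹O_F ⊗_ℚ U) ⊗_{O_F} (E⁻¹O_F ⊗_ℚ U') ≅ E⁻¹O_F ⊗_ℚ (U ⊗_ℚ U'). -/
/-!
`E⁻¹O_F` is the localization of `O_F` at the multiplicative set `E` of sequences `(c_n ^ d_n)` with
`d_n = 0` for almost all `n`: an element has non-polynomial entries at only finitely many `n`, and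
there multiplying by a power of `c_n` clears the negative degrees. Over a localization `A` of `R`,
tensor products of `A`-modules over `R` and over `A` coincide, and
`(A ⊗ U) ⊗_A (A ⊗ U') ≅ A ⊗ (U ⊗ U')` is the distributivity of base change.
-/

open LaurentPolynomial

noncomputable section

/-- `E⁻¹O_F` regarded as a `ℚ`-subalgebra of `∏_{n≥1} ℚ[c_n,c_n⁻¹]` (same carrier as the
subring `EinvOF`), so that it carries a `ℚ`-vector space structure. -/
def EinvOFalg : Subalgebra ℚ LF :=
  { EinvOF.toSubsemiring with
    algebraMap_mem' := fun q => by
      refine Set.finite_empty.subset fun n hn => ?_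
      exact hn ⟨Polynomial.C q, by
        simp only [Polynomial.toLaurent_C, Pi.algebraMap_apply, C_eq_algebraMap]⟩ }

set_option synthInstance.maxHeartbeats 1000000
set_option maxHeartbeats 1000000

/-- The evident ring homomorphism `j : O_F → E⁻¹O_F`, with target the `ℚ`-subalgebra model. -/
def jA : OF →+* EinvOFalg :=
  (Pi.ringHom fun n => (Polynomial.toLaurent (R := ℚ)).comp (Pi.evalRingHom _ n)).codRestrict
    EinvOFalg (fun f => jFull_mem f)

/-- `E⁻¹O_F` is an `O_F`-algebra (hence an `O_F`-module) via `j`. -/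
instance : Algebra OF EinvOFalg := jA.toAlgebra

instance : SMulCommClass ℚ OF EinvOFalg :=
  ⟨fun q r x => by
    rw [Algebra.smul_def r x, Algebra.smul_def r (q • x)]
    exact (mul_smul_comm q _ x).symm⟩

open TensorProduct

lemma LaurentPolynomial.exists_toLaurent_eq_mul_T (f : LaurentPolynomial ℚ) :
    ∃ (d : ℕ) (p : Polynomial ℚ), Polynomial.toLaurent p = f * T d ∧ (f ∈ polyRange → d = 0) := by
  by_cases hf : f ∈ polyRange
  · obtain ⟨p, hp⟩ := hf
    exact ⟨0, p, by simp [hp, T_zero], fun _ => rfl⟩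
  · obtain ⟨d, p, hp⟩ := exists_T_pow f
    exact ⟨d, p, hp, fun h => absurd h hf⟩

lemma mem_EinvOFalg_iff {f : LF} : f ∈ EinvOFalg ↔ {n | f n ∉ polyRange}.Finite := Iff.rfl

lemma algebraMap_EinvOFalg_injective : Function.Injective (algebraMap OF EinvOFalg) :=
  fun _ _ h => funext fun n => Polynomial.toLaurent_injective (congrFun (congrArg Subtype.val h) n)

/-- The multiplicative set `E` of the notation `E⁻¹O_F`. -/
def denominators : Submonoid OF where
  carrier := Set.range fun d : ℕ+ →₀ ℕ => fun n => Polynomial.X ^ d n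
  one_mem' := ⟨0, by ext1 n; simp⟩
  mul_mem' := by
    rintro _ _ ⟨d, rfl⟩ ⟨d', rfl⟩
    exact ⟨d + d', by ext1 n; simp [pow_add]⟩

lemma isUnit_algebraMap_of_mem_denominators {s : OF} (hs : s ∈ denominators) :
    IsUnit (algebraMap OF EinvOFalg s) := by
  obtain ⟨d, rfl⟩ := hs
  have hinv : (fun n => T (-(d n : ℤ)) : LF) ∈ EinvOFalg := by
    refine mem_EinvOFalg_iff.2 (d.support.finite_toSet.subset fun n hn => ?_)
    refine Finsupp.mem_support_iff.2 fun hdn => hn ?_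
    rw [hdn, Nat.cast_zero, neg_zero, T_zero]
    exact one_mem polyRange
  refine IsUnit.of_mul_eq_one ⟨_, hinv⟩ (Subtype.ext (funext fun n => ?_))
  change Polynomial.toLaurent (Polynomial.X ^ d n) * T (-(d n : ℤ)) = 1
  rw [Polynomial.toLaurent_X_pow, ← T_add, add_neg_cancel, T_zero]

lemma exists_mul_algebraMap_denominators_eq (z : EinvOFalg) :
    ∃ x : OF × denominators, z * algebraMap OF EinvOFalg x.2 = algebraMap OF EinvOFalg x.1 := by
  choose d p hp hd0 using fun n => (z : LF) n |>.exists_toLaurent_eq_mul_T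
  have hd : (Function.support d).Finite :=
    (mem_EinvOFalg_iff.1 z.2).subset fun n hn => mt (hd0 n) hn
  refine ⟨(p, ⟨_, Finsupp.ofSupportFinite d hd, rfl⟩), Subtype.ext (funext fun n => ?_)⟩
  change (z : LF) n * Polynomial.toLaurent (Polynomial.X ^ d n) = Polynomial.toLaurent (p n)
  rw [Polynomial.toLaurent_X_pow, hp]

instance : IsLocalization denominators EinvOFalg :=
  (isLocalization_iff _ _).2 ⟨fun s => isUnit_algebraMap_of_mem_denominators s.2,
    exists_mul_algebraMap_denominators_eq,
    fun h => ⟨1, by rw [algebraMap_EinvOFalg_injective h]⟩⟩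

theorem stmt8 (U U' : Type) [AddCommGroup U] [Module ℚ U] [AddCommGroup U'] [Module ℚ U'] :
    ∃ e : ((EinvOFalg ⊗[ℚ] U) ⊗[OF] (EinvOFalg ⊗[ℚ] U')) ≃ₗ[OF]
        (EinvOFalg ⊗[ℚ] (U ⊗[ℚ] U')),
      ∀ (a b : EinvOFalg) (v : U) (v' : U'),
        e ((a ⊗ₜ[ℚ] v) ⊗ₜ[OF] (b ⊗ₜ[ℚ] v')) = (a * b) ⊗ₜ[ℚ] (v ⊗ₜ[ℚ] v') := by
  let overLocalization := IsLocalization.moduleTensorEquiv denominators EinvOFalg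
    (EinvOFalg ⊗[ℚ] U) (EinvOFalg ⊗[ℚ] U')
  refine ⟨(overLocalization.symm ≪≫ₗ
    (AlgebraTensorModule.distribBaseChange ℚ EinvOFalg U U').symm).restrictScalars OF,
    fun a b v v' => ?_⟩
  have hsymm : overLocalization.symm ((a ⊗ₜ v) ⊗ₜ (b ⊗ₜ v')) = (a ⊗ₜ v) ⊗ₜ (b ⊗ₜ v') :=
    (LinearEquiv.symm_apply_eq _).2 rfl
  simp only [LinearEquiv.restrictScalars_apply, LinearEquiv.trans_apply, hsymm,
    AlgebraTensorModule.distribBaseChange_symm_tmul]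
end
end

section
/- Fix a positive integer n and let ν_n be the function sending n to 1 and every other positive integer to 0. Then the quotient O_F-module O_F(ν_n) / j(O_F) is isomorphic as an O_F-module to ℚ_n, the module ℚ with O_F-action given by the ring homomorphism O_F → ℚ sending f = (f_m) to the constant coefficient of f_n. (This is the algebraic form of the cofibre sequence S^0 → S^{ν_n} → Σσ_n used to compare the algebraic spheres with the cells σ_n.) -/
open LaurentPolynomial

noncomputable section

open TensorProduct

def cpow (ν : ℕ+ →₀ ℕ) : OF := fun n => Polynomial.X ^ ν n

/-- `j(O_F)` as an `O_F`-submodule of `E⁻¹O_F`. -/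
def jRangeSub : Submodule OF EinvOF := LinearMap.range (Algebra.linearMap OF EinvOF)

/-- The `O_F`-submodule `O_F(ν) = { x ∈ E⁻¹O_F : c^ν · x ∈ j(O_F) }`. -/
def OFnu (ν : ℕ+ →₀ ℕ) : Submodule OF EinvOF :=
  Submodule.comap (LinearMap.mulLeft OF (j (cpow ν))) jRangeSub

lemma mem_OFnu (ν : ℕ+ →₀ ℕ) (x : EinvOF) :
    x ∈ OFnu ν ↔ j (cpow ν) * x ∈ j.range := Iff.rfl

/-- `j(O_F)` viewed as a submodule of `O_F(ν)`. -/
def jRangeIn (ν : ℕ+ →₀ ℕ) : Submodule OF (OFnu ν) :=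
  Submodule.comap (OFnu ν).subtype jRangeSub

/-- The quotient `O_F`-module `O_F(ν) / j(O_F)`. -/
abbrev Qmod (ν : ℕ+ →₀ ℕ) := OFnu ν ⧸ jRangeIn ν

/-- The ring homomorphism `O_F → ℚ` sending `f = (f_m)` to the constant coefficient
of `f_n`. -/
def evn (n : ℕ+) : OF →+* ℚ :=
  (Polynomial.constantCoeff).comp (Pi.evalRingHom _ n)

/-- `ℚ_n` : the module `ℚ` with `O_F`-action through `evn n`. -/
def Qn (_ : ℕ+) : Type := ℚ

instance (n : ℕ+) : AddCommGroup (Qn n) := inferInstanceAs (AddCommGroup ℚ)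

instance (n : ℕ+) : Module OF (Qn n) :=
  Module.compHom ℚ (evn n)


section Aux
variable (n : ℕ+)

lemma j_coe_apply (f : OF) (m : ℕ+) : ((j f : EinvOF) : LF) m = Polynomial.toLaurent (f m) := rfl

lemma coe_mul_apply (a b : EinvOF) (m : ℕ+) :
    ((a * b : EinvOF) : LF) m = (a : LF) m * (b : LF) m := rfl

lemma cpow_single_self : cpow (Finsupp.single n 1) n = Polynomial.X := by
  simp [cpow]

lemma cpow_single_ne {m : ℕ+} (h : m ≠ n) : cpow (Finsupp.single n 1) m = 1 := by
  simp [cpow, Finsupp.single_apply, Ne.symm h]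

/-- the underlying function of the comparison map: the coefficient of `c_n⁻¹`. -/
def phiFun (x : OFnu (Finsupp.single n 1)) : ℚ :=
  (LaurentPolynomial.trunc (T 1 * (x.1 : LF) n)).coeff 0

lemma phi_key (x : OFnu (Finsupp.single n 1)) :
    ∃ p : Polynomial ℚ, T 1 * (x.1 : LF) n = Polynomial.toLaurent p ∧
      (∀ m : ℕ+, m ≠ n → ∃ q : Polynomial ℚ, (x.1 : LF) m = Polynomial.toLaurent q) := by
  obtain ⟨f, hf⟩ := (mem_OFnu _ _).1 x.2
  have hf' : ∀ m, Polynomial.toLaurent (f m)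
      = Polynomial.toLaurent (cpow (Finsupp.single n 1) m) * (x.1 : LF) m := by
    intro m
    exact congrArg (fun y : EinvOF => (y : LF) m) hf
  refine ⟨f n, ?_, fun m hm => ⟨f m, ?_⟩⟩
  · have := hf' n
    rw [cpow_single_self, Polynomial.toLaurent_X] at this
    exact this.symm
  · have := hf' m
    rw [cpow_single_ne n hm] at this
    simpa using this.symm

lemma phiFun_add (x y : OFnu (Finsupp.single n 1)) :
    phiFun n (x + y) = phiFun n x + phiFun n y := by
  simp only [phiFun]
  have : ((x + y).1 : LF) n = (x.1 : LF) n + (y.1 : LF) n := rfl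
  rw [this, mul_add, map_add, Polynomial.coeff_add]

lemma smul_coe (f : OF) (x : OFnu (Finsupp.single n 1)) (m : ℕ+) :
    ((f • x).1 : LF) m = Polynomial.toLaurent (f m) * (x.1 : LF) m := by
  have : (f • x).1 = j f * x.1 := by
    rw [Submodule.coe_smul, Algebra.smul_def]; rfl
  rw [this, coe_mul_apply, j_coe_apply]

lemma phiFun_smul (f : OF) (x : OFnu (Finsupp.single n 1)) :
    phiFun n (f • x) = evn n f * phiFun n x := by
  obtain ⟨p, hp, -⟩ := phi_key n x
  simp only [phiFun, smul_coe]
  rw [mul_left_comm, hp, ← map_mul, Polynomial.trunc_toLaurent, Polynomial.mul_coeff_zero,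
    Polynomial.trunc_toLaurent]
  rfl

/-- The comparison map as an `O_F`-linear map. -/
def phi : OFnu (Finsupp.single n 1) →ₗ[OF] Qn n where
  toFun := phiFun n
  map_add' := phiFun_add n
  map_smul' := fun f x => by
    show phiFun n (f • x) = evn n f * phiFun n x
    exact phiFun_smul n f x

lemma phi_surjective : Function.Surjective (phi n) := by
  intro r0
  let r : ℚ := r0
  set yf : LF := fun m => if m = n then LaurentPolynomial.C r * T (-1) else 0 with hyf
  have hy : yf ∈ EinvOF := by
    show Set.Finite {m : ℕ+ | yf m ∉ polyRange}
    refine (Set.finite_singleton n).subset fun m hm => ?_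
    simp only [Set.mem_setOf_eq] at hm
    by_contra h
    simp only [Set.mem_singleton_iff] at h
    rw [hyf] at hm
    simp only [if_neg h] at hm
    exact hm (zero_mem _)
  have keyn : T 1 * (LaurentPolynomial.C r * T (-1)) = Polynomial.toLaurent (Polynomial.C r) := by
    rw [Polynomial.toLaurent_C, mul_comm (T 1), mul_assoc, ← T_add]
    norm_num
  have key : ∀ m : ℕ+, Polynomial.toLaurent
        ((fun m => if m = n then Polynomial.C r else 0 : OF) m)
      = Polynomial.toLaurent (cpow (Finsupp.single n 1) m) * yf m := by
    intro m
    by_cases hm : m = n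
    · subst hm
      simp only [if_pos rfl, hyf, cpow_single_self, Polynomial.toLaurent_X]
      exact keyn.symm
    · simp [hyf, hm, cpow_single_ne n hm]
  have hmem : (⟨yf, hy⟩ : EinvOF) ∈ OFnu (Finsupp.single n 1) := by
    rw [mem_OFnu]
    exact ⟨fun m => if m = n then Polynomial.C r else 0,
      Subtype.ext (funext fun m => key m)⟩
  refine ⟨⟨⟨yf, hy⟩, hmem⟩, ?_⟩
  show phiFun n _ = r
  simp only [phiFun, hyf, if_pos rfl]
  rw [keyn, Polynomial.trunc_toLaurent, Polynomial.coeff_C_zero]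

lemma phi_ker : LinearMap.ker (phi n) = jRangeIn (Finsupp.single n 1) := by
  ext x
  constructor
  · intro hx
    obtain ⟨p, hp, hq⟩ := phi_key n x
    have hx0 : p.coeff 0 = 0 := by
      have : phiFun n x = 0 := hx
      rwa [phiFun, hp, Polynomial.trunc_toLaurent] at this
    obtain ⟨q, hq'⟩ := Polynomial.X_dvd_iff.2 hx0
    have hxn : (x.1 : LF) n = Polynomial.toLaurent q := by
      have h1 : T 1 * (x.1 : LF) n = T 1 * Polynomial.toLaurent q := by
        rw [hp, hq', map_mul, Polynomial.toLaurent_X]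
      exact (isUnit_T 1).mul_left_cancel h1
    choose g hg using hq
    refine ⟨fun m => if hm : m = n then q else g m hm, Subtype.ext (funext fun m => ?_)⟩
    show Polynomial.toLaurent _ = (x.1 : LF) m
    by_cases hm : m = n
    · subst hm; simp [hxn]
    · simp [hm, (hg m hm).symm]
  · rintro ⟨g, hg⟩
    have hgn : Polynomial.toLaurent (g n) = (x.1 : LF) n :=
      congrArg (fun y : EinvOF => (y : LF) n) hg
    show phiFun n x = 0
    rw [phiFun, ← hgn, ← Polynomial.toLaurent_X (R := ℚ), ← map_mul, Polynomial.trunc_toLaurent,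
      Polynomial.mul_coeff_zero, Polynomial.coeff_X_zero, zero_mul]

end Aux

/-!
STATEMENT 13: Fix a positive integer `n` and let `ν_n` send `n` to `1` and everything else
to `0`. Then `O_F(ν_n) / j(O_F)` is isomorphic as an `O_F`-module to `ℚ_n`, the module `ℚ`
with `O_F`-action given by `f ↦ (constant coefficient of f_n)`.
-/

theorem stmt13 (n : ℕ+) :
    Nonempty ((Qmod (Finsupp.single n 1)) ≃ₗ[OF] Qn n) := by
  exact ⟨(Submodule.quotEquivOfEq _ _ (phi_ker n).symm).trans
    (LinearMap.quotKerEquivOfSurjective (phi n) (phi_surjective n))⟩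

end
end
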